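/- arXiv:1702.02160 — 4 statements merged into one kernel-verified Lean document; each statement's English description precedes it below -/
import Mathlib

section
/- For every integer n ≥ 1, the polynomial F_n(x,y,z,w) = (x^n - y^n)(x^n - z^n)(x^n - w^n)(y^n - z^n)(y^n - w^n)(z^n - w^n) belongs to the cube of the complete intersection ideal J_n = ((x^n - y^n)(z^n - w^n), (x^n - z^n)(y^n - w^n)) in K[x,y,z,w]. -/
open MvPolynomial

theorem Fn_mem_Jn_cube (K : Type*) [Field K] (n : ℕ) (hn : 1 ≤ n) :
    (X 0 ^ n - X 1 ^ n) * (X 0 ^ n - X 2 ^ n) * (X 0 ^ n - X 3 ^ n) *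
        (X 1 ^ n - X 2 ^ n) * (X 1 ^ n - X 3 ^ n) * (X 2 ^ n - X 3 ^ n) ∈
      (Ideal.span ({(X 0 ^ n - X 1 ^ n) * (X 2 ^ n - X 3 ^ n),
        (X 0 ^ n - X 2 ^ n) * (X 1 ^ n - X 3 ^ n)} :
        Set (MvPolynomial (Fin 4) K))) ^ 3 := by
  set a : MvPolynomial (Fin 4) K := (X 0 ^ n - X 1 ^ n) * (X 2 ^ n - X 3 ^ n) with ha_def
  set b : MvPolynomial (Fin 4) K := (X 0 ^ n - X 2 ^ n) * (X 1 ^ n - X 3 ^ n) with hb_def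
  set I := Ideal.span ({a, b} : Set (MvPolynomial (Fin 4) K)) with hI
  have ha : a ∈ I := Ideal.subset_span (Set.mem_insert _ _)
  have hb : b ∈ I := Ideal.subset_span (Set.mem_insert_of_mem _ rfl)
  have key : (X 0 ^ n - X 1 ^ n) * (X 0 ^ n - X 2 ^ n) * (X 0 ^ n - X 3 ^ n) *
      (X 1 ^ n - X 2 ^ n) * (X 1 ^ n - X 3 ^ n) * (X 2 ^ n - X 3 ^ n)
      = a * b * (b - a) := by rw [ha_def, hb_def]; ring
  rw [key, pow_succ, sq]
  exact Ideal.mul_mem_mul (Ideal.mul_mem_mul ha hb) (I.sub_mem hb ha)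
end

section
/- Let n ≥ 1. In K[x,y,z,w], the ideal generated by g_1, …, g_6 (as defined below) equals J_n ∩ (x,y) ∩ (x,z) ∩ (x,w) ∩ (y,z) ∩ (y,w) ∩ (z,w), where J_n = ((x^n - y^n)(z^n - w^n), (x^n - z^n)(y^n - w^n)). -/
open MvPolynomial

noncomputable def sub2 (K : Type*) [CommSemiring K] (i j : Fin 4) : Fin 4 → MvPolynomial (Fin 4) K :=
  fun k => if k = i ∨ k = j then 0 else X k

lemma sub2_self_left (K : Type*) [CommSemiring K] (i j : Fin 4) : sub2 K i j i = 0 := by simp [sub2]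
lemma sub2_self_right (K : Type*) [CommSemiring K] (i j : Fin 4) : sub2 K i j j = 0 := by simp [sub2]
lemma sub2_ne (K : Type*) [CommSemiring K] (i j k : Fin 4) (h1 : k ≠ i) (h2 : k ≠ j) :
    sub2 K i j k = X k := by simp [sub2, h1, h2]

lemma quot_key {K : Type*} [CommRing K] (i j : Fin 4) (f : MvPolynomial (Fin 4) K) :
    Ideal.Quotient.mk (Ideal.span {X i, X j}) (aeval (sub2 K i j) f) =
      Ideal.Quotient.mk (Ideal.span {X i, X j}) f := by
  have key : (Ideal.Quotient.mk (Ideal.span {X i, X j})).comp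
      ((aeval (sub2 K i j) : MvPolynomial (Fin 4) K →ₐ[K] MvPolynomial (Fin 4) K) :
        MvPolynomial (Fin 4) K →+* MvPolynomial (Fin 4) K) =
      Ideal.Quotient.mk (Ideal.span {X i, X j}) := by
    apply MvPolynomial.ringHom_ext
    · intro r; simp
    · intro k
      simp only [RingHom.comp_apply, RingHom.coe_coe, aeval_X]
      by_cases hki : k = i
      · subst hki; rw [sub2_self_left, map_zero]
        exact (((Ideal.Quotient.eq_zero_iff_mem).2 (Ideal.subset_span (by simp)))).symm
      · by_cases hkj : k = j
        · subst hkj; rw [sub2_self_right, map_zero]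
          exact (((Ideal.Quotient.eq_zero_iff_mem).2 (Ideal.subset_span (by simp)))).symm
        · rw [sub2_ne K i j k hki hkj]
  exact RingHom.congr_fun key f

lemma mem_span_XX_iff {K : Type*} [CommRing K] (i j : Fin 4) (f : MvPolynomial (Fin 4) K) :
    f ∈ Ideal.span {X i, X j} ↔ aeval (sub2 K i j) f = 0 := by
  constructor
  · intro hf
    obtain ⟨a, b, rfl⟩ := Ideal.mem_span_pair.mp hf
    simp [sub2_self_left, sub2_self_right]
  · intro h0
    have h := quot_key i j f
    rw [h0, map_zero] at h
    exact Ideal.Quotient.eq_zero_iff_mem.mp h.symm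

lemma aeval_sub2_idem {K : Type*} [CommRing K] (i j : Fin 4) (f : MvPolynomial (Fin 4) K) :
    aeval (sub2 K i j) (aeval (sub2 K i j) f) = aeval (sub2 K i j) f := by
  have key : (aeval (sub2 K i j) : MvPolynomial (Fin 4) K →ₐ[K] MvPolynomial (Fin 4) K).comp
      (aeval (sub2 K i j)) = aeval (sub2 K i j) := by
    apply MvPolynomial.algHom_ext
    intro k
    simp only [AlgHom.comp_apply, aeval_X]
    by_cases hki : k = i
    · subst hki; rw [sub2_self_left, map_zero]
    · by_cases hkj : k = j
      · subst hkj; rw [sub2_self_right, map_zero]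
      · rw [sub2_ne K i j k hki hkj, aeval_X, sub2_ne K i j k hki hkj]
  exact AlgHom.congr_fun key f


lemma aeval_combo {K : Type*} [CommRing K] (v : Fin 4 → MvPolynomial (Fin 4) K)
    (A B F G r s : MvPolynomial (Fin 4) K) (h1 : aeval v F = r) (h2 : aeval v G = s) :
    aeval v (A * F + B * G) = aeval v A * r + aeval v B * s := by
  rw [map_add, map_mul, map_mul, h1, h2]

set_option maxHeartbeats 1000000 in
theorem In_eq_intersection (K : Type*) [Field K] [CharZero K] (n : ℕ) (hn : 1 ≤ n) :
    Ideal.span ({(X 0 ^ n - X 1 ^ n) * (X 2 ^ n - X 3 ^ n) * X 0 * X 1,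
        (X 0 ^ n - X 1 ^ n) * (X 2 ^ n - X 3 ^ n) * X 2 * X 3,
        (X 0 ^ n - X 2 ^ n) * (X 1 ^ n - X 3 ^ n) * X 0 * X 2,
        (X 0 ^ n - X 2 ^ n) * (X 1 ^ n - X 3 ^ n) * X 1 * X 3,
        (X 0 ^ n - X 3 ^ n) * (X 1 ^ n - X 2 ^ n) * X 0 * X 3,
        (X 0 ^ n - X 3 ^ n) * (X 1 ^ n - X 2 ^ n) * X 1 * X 2} :
        Set (MvPolynomial (Fin 4) K)) =
      Ideal.span {(X 0 ^ n - X 1 ^ n) * (X 2 ^ n - X 3 ^ n),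
          (X 0 ^ n - X 2 ^ n) * (X 1 ^ n - X 3 ^ n)} ⊓
        Ideal.span {X 0, X 1} ⊓ Ideal.span {X 0, X 2} ⊓ Ideal.span {X 0, X 3} ⊓
        Ideal.span {X 1, X 2} ⊓ Ideal.span {X 1, X 3} ⊓ Ideal.span {X 2, X 3} := by
  obtain ⟨m, rfl⟩ : ∃ m, n = m + 1 := ⟨n - 1, (Nat.succ_pred_eq_of_pos hn).symm⟩
  have hnz : ∀ i j : Fin 4, (X i ^ (m+1) * X j ^ (m+1) : MvPolynomial (Fin 4) K) ≠ 0 :=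
    fun i j => mul_ne_zero (pow_ne_zero _ (X_ne_zero _)) (pow_ne_zero _ (X_ne_zero _))
  apply le_antisymm
  · -- forward inclusion
    simp only [le_inf_iff]
    refine ⟨⟨⟨⟨⟨⟨?_, ?_⟩, ?_⟩, ?_⟩, ?_⟩, ?_⟩, ?_⟩
    · rw [Ideal.span_le]
      rintro p hp
      simp only [Set.mem_insert_iff, Set.mem_singleton_iff] at hp
      rcases hp with rfl | rfl | rfl | rfl | rfl | rfl
      · exact Ideal.mem_span_pair.mpr ⟨X 0 * X 1, 0, by ring⟩
      · exact Ideal.mem_span_pair.mpr ⟨X 2 * X 3, 0, by ring⟩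
      · exact Ideal.mem_span_pair.mpr ⟨0, X 0 * X 2, by ring⟩
      · exact Ideal.mem_span_pair.mpr ⟨0, X 1 * X 3, by ring⟩
      · exact Ideal.mem_span_pair.mpr ⟨-(X 0 * X 3), X 0 * X 3, by ring⟩
      · exact Ideal.mem_span_pair.mpr ⟨-(X 1 * X 2), X 1 * X 2, by ring⟩
    · rw [Ideal.span_le]
      rintro p hp
      simp only [Set.mem_insert_iff, Set.mem_singleton_iff] at hp
      rcases hp with rfl | rfl | rfl | rfl | rfl | rfl <;>
        · rw [SetLike.mem_coe, mem_span_XX_iff 0 1]; simp [sub2]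
    · rw [Ideal.span_le]
      rintro p hp
      simp only [Set.mem_insert_iff, Set.mem_singleton_iff] at hp
      rcases hp with rfl | rfl | rfl | rfl | rfl | rfl <;>
        · rw [SetLike.mem_coe, mem_span_XX_iff 0 2]; simp [sub2]
    · rw [Ideal.span_le]
      rintro p hp
      simp only [Set.mem_insert_iff, Set.mem_singleton_iff] at hp
      rcases hp with rfl | rfl | rfl | rfl | rfl | rfl <;>
        · rw [SetLike.mem_coe, mem_span_XX_iff 0 3]; simp [sub2]
    · rw [Ideal.span_le]
      rintro p hp
      simp only [Set.mem_insert_iff, Set.mem_singleton_iff] at hp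
      rcases hp with rfl | rfl | rfl | rfl | rfl | rfl <;>
        · rw [SetLike.mem_coe, mem_span_XX_iff 1 2]; simp [sub2]
    · rw [Ideal.span_le]
      rintro p hp
      simp only [Set.mem_insert_iff, Set.mem_singleton_iff] at hp
      rcases hp with rfl | rfl | rfl | rfl | rfl | rfl <;>
        · rw [SetLike.mem_coe, mem_span_XX_iff 1 3]; simp [sub2]
    · rw [Ideal.span_le]
      rintro p hp
      simp only [Set.mem_insert_iff, Set.mem_singleton_iff] at hp
      rcases hp with rfl | rfl | rfl | rfl | rfl | rfl <;>
        · rw [SetLike.mem_coe, mem_span_XX_iff 2 3]; simp [sub2]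
  · -- reverse inclusion
    intro f hf
    simp only [Submodule.mem_inf] at hf
    obtain ⟨⟨⟨⟨⟨⟨hJ, h01⟩, h02⟩, h03⟩, h12⟩, h13⟩, h23⟩ := hf
    obtain ⟨A, B, hAB⟩ := Ideal.mem_span_pair.mp hJ
    -- A ∈ (x, z) via killing x, z
    have hA02 : A ∈ Ideal.span {X 0, X 2} := by
      have e1 : aeval (R := K) (sub2 K 0 2) ((X 0^(m+1) - X 1^(m+1)) * (X 2^(m+1) - X 3^(m+1))) =
          X 1^(m+1) * X 3^(m+1) := by simp [sub2]
      have e2 : aeval (R := K) (sub2 K 0 2) ((X 0^(m+1) - X 2^(m+1)) * (X 1^(m+1) - X 3^(m+1))) = 0 := by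
        simp [sub2]
      have h : aeval (sub2 K 0 2) A * (X 1^(m+1) * X 3^(m+1)) + aeval (sub2 K 0 2) B * 0 = 0 := by
        rw [← aeval_combo _ A B _ _ _ _ e1 e2, hAB]
        exact (mem_span_XX_iff 0 2 f).mp h02
      rw [mul_zero, add_zero] at h
      exact (mem_span_XX_iff 0 2 A).mpr ((mul_eq_zero.mp h).resolve_right (hnz 1 3))
    -- aeval killing y, w of A is zero
    have hA13z : aeval (sub2 K 1 3) A = 0 := by
      have e1 : aeval (R := K) (sub2 K 1 3) ((X 0^(m+1) - X 1^(m+1)) * (X 2^(m+1) - X 3^(m+1))) =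
          X 0^(m+1) * X 2^(m+1) := by simp [sub2]
      have e2 : aeval (R := K) (sub2 K 1 3) ((X 0^(m+1) - X 2^(m+1)) * (X 1^(m+1) - X 3^(m+1))) = 0 := by
        simp [sub2]
      have h : aeval (sub2 K 1 3) A * (X 0^(m+1) * X 2^(m+1)) + aeval (sub2 K 1 3) B * 0 = 0 := by
        rw [← aeval_combo _ A B _ _ _ _ e1 e2, hAB]
        exact (mem_span_XX_iff 1 3 f).mp h13
      rw [mul_zero, add_zero] at h
      exact (mul_eq_zero.mp h).resolve_right (hnz 0 2)
    -- B ∈ (x, y) via killing x, y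
    have hB01 : B ∈ Ideal.span {X 0, X 1} := by
      have e1 : aeval (R := K) (sub2 K 0 1) ((X 0^(m+1) - X 1^(m+1)) * (X 2^(m+1) - X 3^(m+1))) = 0 := by
        simp [sub2]
      have e2 : aeval (R := K) (sub2 K 0 1) ((X 0^(m+1) - X 2^(m+1)) * (X 1^(m+1) - X 3^(m+1))) =
          X 2^(m+1) * X 3^(m+1) := by simp [sub2]
      have h : aeval (sub2 K 0 1) A * 0 + aeval (sub2 K 0 1) B * (X 2^(m+1) * X 3^(m+1)) = 0 := by
        rw [← aeval_combo _ A B _ _ _ _ e1 e2, hAB]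
        exact (mem_span_XX_iff 0 1 f).mp h01
      rw [mul_zero, zero_add] at h
      exact (mem_span_XX_iff 0 1 B).mpr ((mul_eq_zero.mp h).resolve_right (hnz 2 3))
    -- aeval killing z, w of B is zero
    have hB23z : aeval (sub2 K 2 3) B = 0 := by
      have e1 : aeval (R := K) (sub2 K 2 3) ((X 0^(m+1) - X 1^(m+1)) * (X 2^(m+1) - X 3^(m+1))) = 0 := by
        simp [sub2]
      have e2 : aeval (R := K) (sub2 K 2 3) ((X 0^(m+1) - X 2^(m+1)) * (X 1^(m+1) - X 3^(m+1))) =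
          X 0^(m+1) * X 1^(m+1) := by simp [sub2]
      have h : aeval (sub2 K 2 3) A * 0 + aeval (sub2 K 2 3) B * (X 0^(m+1) * X 1^(m+1)) = 0 := by
        rw [← aeval_combo _ A B _ _ _ _ e1 e2, hAB]
        exact (mem_span_XX_iff 2 3 f).mp h23
      rw [mul_zero, zero_add] at h
      exact (mul_eq_zero.mp h).resolve_right (hnz 0 1)
    -- decompose A
    obtain ⟨p, q, hpq⟩ := Ideal.mem_span_pair.mp hA02
    have hrmem : p - aeval (sub2 K 1 3) p ∈ Ideal.span {X 1, X 3} :=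
      (mem_span_XX_iff 1 3 _).mpr (by rw [map_sub, aeval_sub2_idem, sub_self])
    have hsmem : q - aeval (sub2 K 1 3) q ∈ Ideal.span {X 1, X 3} :=
      (mem_span_XX_iff 1 3 _).mpr (by rw [map_sub, aeval_sub2_idem, sub_self])
    obtain ⟨a1, a2, ha⟩ := Ideal.mem_span_pair.mp hrmem
    obtain ⟨a3, a4, hs⟩ := Ideal.mem_span_pair.mp hsmem
    have heval : aeval (sub2 K 1 3) A =
        aeval (sub2 K 1 3) p * X 0 + aeval (sub2 K 1 3) q * X 2 := by
      rw [← hpq]; simp [sub2]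
    have hAeq : A = a1 * (X 0 * X 1) + a2 * (X 0 * X 3) + a3 * (X 1 * X 2) + a4 * (X 2 * X 3) := by
      linear_combination -hpq - heval + hA13z - X 0 * ha - X 2 * hs
    -- decompose B
    obtain ⟨p', q', hpq'⟩ := Ideal.mem_span_pair.mp hB01
    have hrmem' : p' - aeval (sub2 K 2 3) p' ∈ Ideal.span {X 2, X 3} :=
      (mem_span_XX_iff 2 3 _).mpr (by rw [map_sub, aeval_sub2_idem, sub_self])
    have hsmem' : q' - aeval (sub2 K 2 3) q' ∈ Ideal.span {X 2, X 3} :=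
      (mem_span_XX_iff 2 3 _).mpr (by rw [map_sub, aeval_sub2_idem, sub_self])
    obtain ⟨b1, b2, hb⟩ := Ideal.mem_span_pair.mp hrmem'
    obtain ⟨b3, b4, hb'⟩ := Ideal.mem_span_pair.mp hsmem'
    have heval' : aeval (sub2 K 2 3) B =
        aeval (sub2 K 2 3) p' * X 0 + aeval (sub2 K 2 3) q' * X 1 := by
      rw [← hpq']; simp [sub2]
    have hBeq : B = b1 * (X 0 * X 2) + b2 * (X 0 * X 3) + b3 * (X 1 * X 2) + b4 * (X 1 * X 3) := by
      linear_combination -hpq' - heval' + hB23z - X 0 * hb - X 1 * hb'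
    -- the coefficient a2 + b2 lies in (y, z)
    have hCmem : a2 + b2 ∈ Ideal.span {X 1, X 2} := by
      have e1 : aeval (R := K) (sub2 K 1 2) ((X 0^(m+1) - X 1^(m+1)) * (X 2^(m+1) - X 3^(m+1))) =
          -(X 0^(m+1) * X 3^(m+1)) := by simp [sub2]
      have e2 : aeval (R := K) (sub2 K 1 2) ((X 0^(m+1) - X 2^(m+1)) * (X 1^(m+1) - X 3^(m+1))) =
          -(X 0^(m+1) * X 3^(m+1)) := by simp [sub2]
      have hA12 : aeval (sub2 K 1 2) A = aeval (sub2 K 1 2) a2 * (X 0 * X 3) := by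
        rw [hAeq]; simp [sub2]
      have hB12 : aeval (sub2 K 1 2) B = aeval (sub2 K 1 2) b2 * (X 0 * X 3) := by
        rw [hBeq]; simp [sub2]
      have h : aeval (sub2 K 1 2) A * -(X 0^(m+1) * X 3^(m+1)) +
          aeval (sub2 K 1 2) B * -(X 0^(m+1) * X 3^(m+1)) = 0 := by
        rw [← aeval_combo _ A B _ _ _ _ e1 e2, hAB]
        exact (mem_span_XX_iff 1 2 f).mp h12
      rw [hA12, hB12] at h
      have hkey : (aeval (sub2 K 1 2) a2 + aeval (sub2 K 1 2) b2) *
          (X 0^(m+1) * X 3^(m+1) * (X 0 * X 3)) = 0 := by linear_combination -h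
      have hnz2 : (X 0^(m+1) * X 3^(m+1) * (X 0 * X 3) : MvPolynomial (Fin 4) K) ≠ 0 :=
        mul_ne_zero (hnz 0 3) (mul_ne_zero (X_ne_zero _) (X_ne_zero _))
      exact (mem_span_XX_iff 1 2 _).mpr
        (by rw [map_add]; exact (mul_eq_zero.mp hkey).resolve_right hnz2)
    obtain ⟨c1, c2, hc⟩ := Ideal.mem_span_pair.mp hCmem
    -- the coefficient a3 + b3 lies in (x, w)
    have hDmem : a3 + b3 ∈ Ideal.span {X 0, X 3} := by
      have e1 : aeval (R := K) (sub2 K 0 3) ((X 0^(m+1) - X 1^(m+1)) * (X 2^(m+1) - X 3^(m+1))) =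
          -(X 1^(m+1) * X 2^(m+1)) := by simp [sub2]
      have e2 : aeval (R := K) (sub2 K 0 3) ((X 0^(m+1) - X 2^(m+1)) * (X 1^(m+1) - X 3^(m+1))) =
          -(X 1^(m+1) * X 2^(m+1)) := by simp [sub2]; ring
      have hA03 : aeval (sub2 K 0 3) A = aeval (sub2 K 0 3) a3 * (X 1 * X 2) := by
        rw [hAeq]; simp [sub2]
      have hB03 : aeval (sub2 K 0 3) B = aeval (sub2 K 0 3) b3 * (X 1 * X 2) := by
        rw [hBeq]; simp [sub2]
      have h : aeval (sub2 K 0 3) A * -(X 1^(m+1) * X 2^(m+1)) +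
          aeval (sub2 K 0 3) B * -(X 1^(m+1) * X 2^(m+1)) = 0 := by
        rw [← aeval_combo _ A B _ _ _ _ e1 e2, hAB]
        exact (mem_span_XX_iff 0 3 f).mp h03
      rw [hA03, hB03] at h
      have hkey : (aeval (sub2 K 0 3) a3 + aeval (sub2 K 0 3) b3) *
          (X 1^(m+1) * X 2^(m+1) * (X 1 * X 2)) = 0 := by linear_combination -h
      have hnz2 : (X 1^(m+1) * X 2^(m+1) * (X 1 * X 2) : MvPolynomial (Fin 4) K) ≠ 0 :=
        mul_ne_zero (hnz 1 2) (mul_ne_zero (X_ne_zero _) (X_ne_zero _))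
      exact (mem_span_XX_iff 0 3 _).mpr
        (by rw [map_add]; exact (mul_eq_zero.mp hkey).resolve_right hnz2)
    obtain ⟨d1, d2, hd⟩ := Ideal.mem_span_pair.mp hDmem
    -- final assembly
    have hfeq : f =
        (a1 + c1 * X 3 + d1 * X 2) * ((X 0^(m+1) - X 1^(m+1)) * (X 2^(m+1) - X 3^(m+1)) * X 0 * X 1)
        + (a4 + c2 * X 0 + d2 * X 1) * ((X 0^(m+1) - X 1^(m+1)) * (X 2^(m+1) - X 3^(m+1)) * X 2 * X 3)
        + b1 * ((X 0^(m+1) - X 2^(m+1)) * (X 1^(m+1) - X 3^(m+1)) * X 0 * X 2)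
        + b4 * ((X 0^(m+1) - X 2^(m+1)) * (X 1^(m+1) - X 3^(m+1)) * X 1 * X 3)
        + b2 * ((X 0^(m+1) - X 3^(m+1)) * (X 1^(m+1) - X 2^(m+1)) * X 0 * X 3)
        + b3 * ((X 0^(m+1) - X 3^(m+1)) * (X 1^(m+1) - X 2^(m+1)) * X 1 * X 2) := by
      linear_combination (-1 : MvPolynomial (Fin 4) K) * hAB
        + ((X 0^(m+1) - X 1^(m+1)) * (X 2^(m+1) - X 3^(m+1))) * hAeq
        + ((X 0^(m+1) - X 2^(m+1)) * (X 1^(m+1) - X 3^(m+1))) * hBeq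
        - (X 0 * X 3 * ((X 0^(m+1) - X 1^(m+1)) * (X 2^(m+1) - X 3^(m+1)))) * hc
        - (X 1 * X 2 * ((X 0^(m+1) - X 1^(m+1)) * (X 2^(m+1) - X 3^(m+1)))) * hd
    rw [hfeq]
    refine Ideal.add_mem _ (Ideal.add_mem _ (Ideal.add_mem _ (Ideal.add_mem _
      (Ideal.add_mem _ ?_ ?_) ?_) ?_) ?_) ?_ <;>
      exact Ideal.mul_mem_left _ _ (Ideal.subset_span (by simp))
end

section
/- Let n ≥ 3 and let K be a field of characteristic 0. There do not exist homogeneous polynomials h_{i,j} ∈ K[x,y,z,w] of degree 2n − 4 (for 1 ≤ i ≤ j ≤ 6) such that F_n = Σ_{1≤i≤j≤6} h_{i,j} g_i g_j, where F_n = (x^n - y^n)(x^n - z^n)(x^n - w^n)(y^n - z^n)(y^n - w^n)(z^n - w^n) and g_1, …, g_6 are the generators g_1 = (x^n - y^n)(z^n - w^n)xy, g_2 = (x^n - y^n)(z^n - w^n)zw, g_3 = (x^n - z^n)(y^n - w^n)xz, g_4 = (x^n - z^n)(y^n - w^n)yw, g_5 = (x^n - w^n)(y^n - z^n)xw, g_6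 = (x^n - w^n)(y^n - z^n)yz. -/
/-!
Write `g_i = q_i(x^n, y^n, z^n, w^n) · m_i` with `q_i` a product of two linear forms and `m_i` the
squarefree quadratic monomial of `g_i`, and note `F_n = F_1(x^n, y^n, z^n, w^n)`. Compare the
coefficients of monomials all of whose exponents are divisible by `n`. An exponent `u` of
`h_{i,j}` contributes to such a coefficient only if `u + m_i + m_j ≡ 0 (mod n)` coordinatewise,
so `u_t ≥ n - (m_i m_j)_t` wherever `m_i m_j` involves the variable `t`. For `i ≠ j` the monomial
`m_i m_j` involves at least three variables, which is incompatible with `deg u = 2n - 4`; for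
`i = j` it forces `u = m_i^(n-2)`. Hence `F_1 = ∑ c_i q_i² m_i` for some constants `c_i`, and
evaluating this sextic identity at five points gives an inconsistent linear system.
-/

open MvPolynomial

/-- The six generators of the ideal of the restricted Fermat configuration of lines in `ℙ³`,
with variables `x = X 0`, `y = X 1`, `z = X 2`, `w = X 3`. -/
noncomputable def fermatGen (K : Type*) [Field K] (n : ℕ) : Fin 6 → MvPolynomial (Fin 4) K
  | 0 => (X 0 ^ n - X 1 ^ n) * (X 2 ^ n - X 3 ^ n) * X 0 * X 1
  | 1 => (X 0 ^ n - X 1 ^ n) * (X 2 ^ n - X 3 ^ n) * X 2 * X 3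
  | 2 => (X 0 ^ n - X 2 ^ n) * (X 1 ^ n - X 3 ^ n) * X 0 * X 2
  | 3 => (X 0 ^ n - X 2 ^ n) * (X 1 ^ n - X 3 ^ n) * X 1 * X 3
  | 4 => (X 0 ^ n - X 3 ^ n) * (X 1 ^ n - X 2 ^ n) * X 0 * X 3
  | 5 => (X 0 ^ n - X 3 ^ n) * (X 1 ^ n - X 2 ^ n) * X 1 * X 2

lemma Nat.sub_le_of_dvd_add {n a c : ℕ} (h : n ∣ a + c) (hc : c ≠ 0) : n - c ≤ a := by
  have := Nat.le_of_dvd (by omega) h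
  omega

namespace Finsupp

variable {σ : Type*}

lemma eq_of_le_of_degree_le {u w : σ →₀ ℕ} (hle : w ≤ u) (hdeg : u.degree ≤ w.degree) :
    u = w := by
  obtain ⟨v, rfl⟩ := le_iff_exists_add.mp hle
  rw [map_add] at hdeg
  rw [(degree_eq_zero_iff v).mp (by omega), add_zero]

lemma sum_sub_le_degree {n : ℕ} {u e : σ →₀ ℕ} (h : ∀ t, n ∣ u t + e t) :
    ∑ t ∈ e.support, (n - e t) ≤ u.degree :=
  calc ∑ t ∈ e.support, (n - e t) ≤ ∑ t ∈ e.support, u t :=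
        Finset.sum_le_sum fun t ht => Nat.sub_le_of_dvd_add (h t) (mem_support_iff.mp ht)
    _ ≤ u.degree := Finset.sum_le_sum_of_ne_zero fun _ _ hu => mem_support_iff.mpr hu

lemma eq_nsmul_of_dvd_add_mul {n k : ℕ} (hk : k ≠ 0) {u E : σ →₀ ℕ} (hE : ∀ t, E t ≤ 1)
    (h : ∀ t, n ∣ u t + k * E t) (hdeg : u.degree ≤ (n - k) * E.degree) :
    u = (n - k) • E := by
  refine eq_of_le_of_degree_le (fun t => ?_) (by simpa using hdeg)
  rcases Nat.le_one_iff_eq_zero_or_eq_one.mp (hE t) with h0 | h1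
  · simp [h0]
  · simpa [h1] using Nat.sub_le_of_dvd_add (by simpa [h1] using h t) hk

end Finsupp

namespace MvPolynomial

variable {σ R : Type*} [CommSemiring R] {n : ℕ}

def ExponentsModEq (n : ℕ) (e : σ →₀ ℕ) (p : MvPolynomial σ R) : Prop :=
  ∀ v ∈ p.support, ∀ t, v t ≡ e t [MOD n]

lemma exponentsModEq_expand_mul_monomial (n : ℕ) (p : MvPolynomial σ R) (e : σ →₀ ℕ) (r : R) :
    ExponentsModEq n e (expand n p * monomial e r) := by
  classical
  intro v hv t
  obtain ⟨a, ha, b, hb, rfl⟩ := Finset.mem_add.mp (support_mul _ _ hv)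
  obtain ⟨d, -, rfl⟩ := Finset.mem_image.mp (support_expand_subset p ha)
  rw [Finset.mem_singleton.mp (support_monomial_subset hb)]
  simp [Nat.ModEq]

lemma ExponentsModEq.mul {e e' : σ →₀ ℕ} {p q : MvPolynomial σ R} (hp : ExponentsModEq n e p)
    (hq : ExponentsModEq n e' q) : ExponentsModEq n (e + e') (p * q) := by
  classical
  intro v hv t
  obtain ⟨a, ha, b, hb, rfl⟩ := Finset.mem_add.mp (support_mul _ _ hv)
  exact (hp a ha t).add (hq b hb t)

lemma ExponentsModEq.dvd_add {e : σ →₀ ℕ} {q : MvPolynomial σ R} (hq : ExponentsModEq n e q)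
    {u v M : σ →₀ ℕ} (hv : coeff v q ≠ 0) (huv : u + v = n • M) (t : σ) : n ∣ u t + e t := by
  have hsum : u t + v t = n * M t := by simpa using DFunLike.congr_fun huv t
  refine (Nat.modEq_zero_iff_dvd).mp ?_
  calc u t + e t ≡ u t + v t [MOD n] := ((hq v (mem_support_iff.mpr hv) t).add_left _).symm
    _ ≡ 0 [MOD n] := by rw [hsum, Nat.modEq_zero_iff_dvd]; exact dvd_mul_right _ _

lemma IsHomogeneous.degree_eq {m : ℕ} {h : MvPolynomial σ R} (hh : h.IsHomogeneous m)
    {u : σ →₀ ℕ} (hu : coeff u h ≠ 0) : u.degree = m :=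
  (hh.degree_eq_sum_deg_support (mem_support_iff.mpr hu)).symm

lemma monomial_single_add_single (a b : σ) :
    monomial (Finsupp.single a 1 + Finsupp.single b 1) (1 : R) = X a * X b := by
  rw [X, X, monomial_mul, one_mul]

lemma coeff_mul_eq_coeff_monomial_mul {h q : MvPolynomial σ R} {m w : σ →₀ ℕ}
    (hw : ∀ u v, u + v = m → coeff u h ≠ 0 → coeff v q ≠ 0 → u = w) :
    coeff m (h * q) = coeff w h * coeff m (monomial w 1 * q) := by
  classical
  rw [← coeff_C_mul, ← mul_assoc, C_mul_monomial, mul_one, coeff_mul, coeff_mul]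
  refine Finset.sum_congr rfl fun ⟨u, v⟩ huv => ?_
  rw [coeff_monomial]
  split_ifs with hwu
  · rw [hwu]
  · by_cases hu : coeff u h = 0
    · simp [hu]
    by_cases hv : coeff v q = 0
    · simp [hv]
    exact absurd (hw u v (Finset.HasAntidiagonal.mem_antidiagonal.mp huv) hu hv).symm hwu

lemma coeff_nsmul_mul_eq_zero {m : ℕ} {e : σ →₀ ℕ} {h q : MvPolynomial σ R}
    (hh : h.IsHomogeneous m) (hq : ExponentsModEq n e q) (hlt : m < ∑ t ∈ e.support, (n - e t))
    (M : σ →₀ ℕ) : coeff (n • M) (h * q) = 0 := by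
  classical
  rw [coeff_mul]
  refine Finset.sum_eq_zero fun ⟨u, v⟩ huv => ?_
  by_contra hne
  have hdeg := hh.degree_eq (left_ne_zero_of_mul hne)
  have hbound := Finsupp.sum_sub_le_degree
    (hq.dvd_add (right_ne_zero_of_mul hne) (Finset.HasAntidiagonal.mem_antidiagonal.mp huv))
  omega

lemma coeff_nsmul_mul_eq {m : ℕ} {e w : σ →₀ ℕ} {h q : MvPolynomial σ R}
    (hh : h.IsHomogeneous m) (hq : ExponentsModEq n e q)
    (huniq : ∀ u : σ →₀ ℕ, u.degree = m → (∀ t, n ∣ u t + e t) → u = w) (M : σ →₀ ℕ) :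
    coeff (n • M) (h * q) = coeff w h * coeff (n • M) (monomial w 1 * q) :=
  coeff_mul_eq_coeff_monomial_mul fun _ _ huv hu hv =>
    huniq _ (hh.degree_eq hu) (hq.dvd_add hv huv)

end MvPolynomial

section Fermat

variable (K : Type*) [Field K]

noncomputable def fermatExp : Fin 6 → (Fin 4 →₀ ℕ)
  | 0 => Finsupp.single 0 1 + Finsupp.single 1 1
  | 1 => Finsupp.single 2 1 + Finsupp.single 3 1
  | 2 => Finsupp.single 0 1 + Finsupp.single 2 1
  | 3 => Finsupp.single 1 1 + Finsupp.single 3 1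
  | 4 => Finsupp.single 0 1 + Finsupp.single 3 1
  | 5 => Finsupp.single 1 1 + Finsupp.single 2 1

noncomputable def fermatQuad : Fin 6 → MvPolynomial (Fin 4) K
  | 0 | 1 => (X 0 - X 1) * (X 2 - X 3)
  | 2 | 3 => (X 0 - X 2) * (X 1 - X 3)
  | 4 | 5 => (X 0 - X 3) * (X 1 - X 2)

lemma fermatExp_apply_le_one (i : Fin 6) (t : Fin 4) : fermatExp i t ≤ 1 := by
  fin_cases i <;> fin_cases t <;> simp [fermatExp]

lemma degree_fermatExp (i : Fin 6) : (fermatExp i).degree = 2 := by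
  fin_cases i <;> simp [fermatExp]

lemma lt_sum_sub_fermatExp_add {n : ℕ} (hn : 3 ≤ n) {i j : Fin 6} (hij : i ≠ j) :
    2 * n - 4 <
      ∑ t ∈ (fermatExp i + fermatExp j).support, (n - (fermatExp i + fermatExp j) t) := by
  have hsupp : ∀ e : Fin 4 →₀ ℕ, ∑ t ∈ e.support, (n - e t) =
      ∑ t, if e t ≠ 0 then n - e t else 0 := fun e => by
    rw [← Finset.sum_filter]; congr 1; ext t; simp
  rw [hsupp]
  fin_cases i <;> fin_cases j <;> first
    | exact absurd rfl hij
    | (simp [fermatExp, Finsupp.single_apply, Fin.sum_univ_four]; omega)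

noncomputable def fermatProd (n : ℕ) : MvPolynomial (Fin 4) K :=
  (X 0 ^ n - X 1 ^ n) * (X 0 ^ n - X 2 ^ n) * (X 0 ^ n - X 3 ^ n) *
    (X 1 ^ n - X 2 ^ n) * (X 1 ^ n - X 3 ^ n) * (X 2 ^ n - X 3 ^ n)

variable {K}

lemma expand_fermatProd_one (n : ℕ) : expand n (fermatProd K 1) = fermatProd K n := by
  simp [fermatProd]

lemma fermatGen_eq (n : ℕ) (i : Fin 6) :
    fermatGen K n i = expand n (fermatQuad K i) * monomial (fermatExp i) 1 := by
  fin_cases i <;>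
    simp only [fermatGen, fermatQuad, fermatExp, map_mul, map_sub, expand_X,
      monomial_single_add_single] <;>
    ring

lemma exponentsModEq_fermatGen_mul (n : ℕ) (i j : Fin 6) :
    ExponentsModEq n (fermatExp i + fermatExp j) (fermatGen K n i * fermatGen K n j) := by
  simp only [fermatGen_eq]
  exact (exponentsModEq_expand_mul_monomial n _ _ _).mul
    (exponentsModEq_expand_mul_monomial n _ _ _)

lemma monomial_mul_fermatGen_mul_self {n : ℕ} (hn : 2 ≤ n) (i : Fin 6) :
    monomial ((n - 2) • fermatExp i) 1 * (fermatGen K n i * fermatGen K n i) =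
      expand n (fermatQuad K i ^ 2 * monomial (fermatExp i) 1) := by
  have hexp : (n - 2) • fermatExp i + fermatExp i + fermatExp i = n • fermatExp i := by
    rw [add_assoc, ← two_nsmul, ← add_nsmul, Nat.sub_add_cancel hn]
  rw [fermatGen_eq, map_mul, map_pow, expand_monomial, ← hexp]
  calc _ = expand n (fermatQuad K i) ^ 2 * (monomial ((n - 2) • fermatExp i) 1 *
        monomial (fermatExp i) 1 * monomial (fermatExp i) (1 : K)) := by ring
    _ = _ := by rw [monomial_mul, monomial_mul, one_mul, one_mul]

variable {n : ℕ}

lemma coeff_nsmul_mul_fermatGen_mul_eq_zero (hn : 3 ≤ n) {h : MvPolynomial (Fin 4) K}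
    (hh : h.IsHomogeneous (2 * n - 4)) {i j : Fin 6} (hij : i ≠ j) (M : Fin 4 →₀ ℕ) :
    coeff (n • M) (h * (fermatGen K n i * fermatGen K n j)) = 0 :=
  coeff_nsmul_mul_eq_zero hh (exponentsModEq_fermatGen_mul n i j)
    (lt_sum_sub_fermatExp_add hn hij) M

lemma coeff_nsmul_mul_fermatGen_mul_self (hn : 3 ≤ n) {h : MvPolynomial (Fin 4) K}
    (hh : h.IsHomogeneous (2 * n - 4)) (i : Fin 6) (M : Fin 4 →₀ ℕ) :
    coeff (n • M) (h * (fermatGen K n i * fermatGen K n i)) =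
      coeff ((n - 2) • fermatExp i) h *
        coeff M (fermatQuad K i ^ 2 * monomial (fermatExp i) 1) := by
  rw [coeff_nsmul_mul_eq hh (exponentsModEq_fermatGen_mul n i i) (fun u hu hdvd => ?_) M,
    monomial_mul_fermatGen_mul_self (by omega), coeff_expand_smul _ (by omega)]
  refine Finsupp.eq_nsmul_of_dvd_add_mul two_ne_zero (fermatExp_apply_le_one i)
    (fun t => by simpa [two_mul] using hdvd t) ?_
  rw [hu, degree_fermatExp]
  omega

lemma fermatProd_one_eq_sum (hn : 3 ≤ n) (h : Fin 6 → Fin 6 → MvPolynomial (Fin 4) K)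
    (hhom : ∀ i j, i ≤ j → (h i j).IsHomogeneous (2 * n - 4))
    (heq : fermatProd K n = ∑ i, ∑ j ∈ Finset.univ.filter (fun j => i ≤ j),
      h i j * fermatGen K n i * fermatGen K n j) :
    fermatProd K 1 = ∑ i, C (coeff ((n - 2) • fermatExp i) (h i i)) *
      (fermatQuad K i ^ 2 * monomial (fermatExp i) 1) := by
  ext M
  rw [← coeff_expand_smul n (by omega), expand_fermatProd_one, heq]
  simp only [coeff_sum, coeff_C_mul, mul_assoc]
  refine Finset.sum_congr rfl fun i _ => ?_
  rw [Finset.sum_eq_single_of_mem i (by simp) fun j hj hji =>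
      coeff_nsmul_mul_fermatGen_mul_eq_zero hn (hhom i j (Finset.mem_filter.mp hj).2) hji.symm M,
    coeff_nsmul_mul_fermatGen_mul_self hn (hhom i i le_rfl)]

lemma fermatProd_one_ne_sum [CharZero K] (c : Fin 6 → K) :
    fermatProd K 1 ≠ ∑ i, C (c i) * (fermatQuad K i ^ 2 * monomial (fermatExp i) 1) := by
  intro hid
  rw [Fin.sum_univ_six] at hid
  simp only [fermatProd, fermatQuad, fermatExp, monomial_single_add_single, pow_one] at hid
  have e1 := congrArg (eval ![(1 : K), 2, 3, 1]) hid
  have e2 := congrArg (eval ![(3 : K), 2, 1, 1]) hid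
  have e3 := congrArg (eval ![(1 : K), 2, 3, 4]) hid
  have e4 := congrArg (eval ![(1 : K), 2, 3, 0]) hid
  have e5 := congrArg (eval ![(1 : K), 0, 1, 2]) hid
  simp only [map_mul, map_sub, map_add, map_pow, eval_X, eval_C, Matrix.cons_val_zero,
    Matrix.cons_val_one, Matrix.cons_val_two, Matrix.cons_val_three] at e1 e2 e3 e4 e5
  norm_num at e1 e2 e3 e4 e5
  have : (1 : K) = 0 := by
    linear_combination (7 / 24 : K) * e1 + (3 / 8 : K) * e2 - (1 / 24 : K) * e3
      - (1 / 8 : K) * e4 - (3 / 2 : K) * e5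
  exact one_ne_zero this

end Fermat

theorem no_quadratic_representation (K : Type*) [Field K] [CharZero K] (n : ℕ) (hn : 3 ≤ n) :
    ¬ ∃ h : Fin 6 → Fin 6 → MvPolynomial (Fin 4) K,
      (∀ i j : Fin 6, i ≤ j → (h i j).IsHomogeneous (2 * n - 4)) ∧
      (X 0 ^ n - X 1 ^ n) * (X 0 ^ n - X 2 ^ n) * (X 0 ^ n - X 3 ^ n) *
          (X 1 ^ n - X 2 ^ n) * (X 1 ^ n - X 3 ^ n) * (X 2 ^ n - X 3 ^ n) =
        ∑ i : Fin 6, ∑ j ∈ Finset.univ.filter (fun j => i ≤ j),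
          h i j * fermatGen K n i * fermatGen K n j := by
  rintro ⟨h, hhom, heq⟩
  exact fermatProd_one_ne_sum _ (fermatProd_one_eq_sum hn h hhom heq)
end

section
/- Let n ≥ 3 and K a field of characteristic 0. Suppose F_n = Σ_{1≤i≤j≤6} h_{i,j} g_i g_j in K[x,y,z,w] with the g_i as in the restricted Fermat configuration. Reducing modulo the ideal (z), the coefficient of the monomial x^{2n} y^{3n} w^n on the right-hand side can only arise from the summand h_{4,4} g_4^2, and equating coefficients forces the coefficient of y^{n-2} w^{n-2} in h_{4,4} to equal +1. -/
open MvPolynomial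

private lemma fermat_kill {K : Type*} [Field K] (m : Fin 4 →₀ ℕ) (q : MvPolynomial (Fin 4) K)
    (i : Fin 4) (k : ℕ) (hk : m i < k) : coeff m (q * X i ^ k) = 0 := by
  rw [X_pow_eq_monomial, coeff_mul_monomial', if_neg]
  rw [Finsupp.single_le_iff]
  omega

set_option maxHeartbeats 2000000 in
theorem coeff_h44_eq_one_mod_z (K : Type*) [Field K] [CharZero K] (n : ℕ) (hn : 3 ≤ n)
    (h : Fin 6 → Fin 6 → MvPolynomial (Fin 4) K)
    (hhom : ∀ i j : Fin 6, i ≤ j → (h i j).IsHomogeneous (2 * n - 4))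
    (heq : (X 0 ^ n - X 1 ^ n) * (X 0 ^ n - X 2 ^ n) * (X 0 ^ n - X 3 ^ n) *
          (X 1 ^ n - X 2 ^ n) * (X 1 ^ n - X 3 ^ n) * (X 2 ^ n - X 3 ^ n) =
        ∑ i : Fin 6, ∑ j ∈ Finset.univ.filter (fun j => i ≤ j),
          h i j * fermatGen K n i * fermatGen K n j) :
    -- Modulo `(z)`, the monomial `x^(2n) y^(3n) w^n` arises only from `h 3 3 * (g 4)²`;
    -- the forced conclusion is that the coefficient of `y^(n-2) w^(n-2)` in `h_{4,4}` is `+1`.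
    coeff (Finsupp.single 1 (n - 2) + Finsupp.single 3 (n - 2)) (h 3 3) = 1 := by
  classical
  set μ : Fin 4 →₀ ℕ := Finsupp.single 0 (2*n) + Finsupp.single 1 (3*n) + Finsupp.single 3 n
    with hμdef
  have hμ0 : μ 0 = 2*n := by simp [hμdef, Finsupp.single_apply]
  have hμ1 : μ 1 = 3*n := by simp [hμdef, Finsupp.single_apply]
  have hμ2 : μ 2 = 0 := by simp [hμdef, Finsupp.single_apply]
  have hμ3 : μ 3 = n := by simp [hμdef, Finsupp.single_apply]
  -- vanishing of any product with a generator containing the variable z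
  have hv : ∀ (p : MvPolynomial (Fin 4) K) (j : Fin 6), (j = 1 ∨ j = 2 ∨ j = 5) →
      coeff μ (p * fermatGen K n j) = 0 := by
    rintro p j (rfl | rfl | rfl)
    · have e : p * fermatGen K n 1
          = (p * ((X 0 ^ n - X 1 ^ n) * (X 2 ^ n - X 3 ^ n) * X 3)) * X 2 ^ 1 := by
        show p * ((X 0 ^ n - X 1 ^ n) * (X 2 ^ n - X 3 ^ n) * X 2 * X 3) = _
        ring
      rw [e]; exact fermat_kill _ _ _ _ (by omega)
    · have e : p * fermatGen K n 2
          = (p * ((X 0 ^ n - X 2 ^ n) * (X 1 ^ n - X 3 ^ n) * X 0)) * X 2 ^ 1 := by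
        show p * ((X 0 ^ n - X 2 ^ n) * (X 1 ^ n - X 3 ^ n) * X 0 * X 2) = _
        ring
      rw [e]; exact fermat_kill _ _ _ _ (by omega)
    · have e : p * fermatGen K n 5
          = (p * ((X 0 ^ n - X 3 ^ n) * (X 1 ^ n - X 2 ^ n) * X 1)) * X 2 ^ 1 := by
        show p * ((X 0 ^ n - X 3 ^ n) * (X 1 ^ n - X 2 ^ n) * X 1 * X 2) = _
        ring
      rw [e]; exact fermat_kill _ _ _ _ (by omega)
  -- the fifteen pairs involving a generator divisible by z
  have c01 : coeff μ (h 0 1 * fermatGen K n 0 * fermatGen K n 1) = 0 := hv _ 1 (by tauto)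
  have c02 : coeff μ (h 0 2 * fermatGen K n 0 * fermatGen K n 2) = 0 := hv _ 2 (by tauto)
  have c05 : coeff μ (h 0 5 * fermatGen K n 0 * fermatGen K n 5) = 0 := hv _ 5 (by tauto)
  have c11 : coeff μ (h 1 1 * fermatGen K n 1 * fermatGen K n 1) = 0 := hv _ 1 (by tauto)
  have c12 : coeff μ (h 1 2 * fermatGen K n 1 * fermatGen K n 2) = 0 := hv _ 2 (by tauto)
  have c13 : coeff μ (h 1 3 * fermatGen K n 1 * fermatGen K n 3) = 0 := by
    rw [mul_right_comm]; exact hv _ 1 (by tauto)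
  have c14 : coeff μ (h 1 4 * fermatGen K n 1 * fermatGen K n 4) = 0 := by
    rw [mul_right_comm]; exact hv _ 1 (by tauto)
  have c15 : coeff μ (h 1 5 * fermatGen K n 1 * fermatGen K n 5) = 0 := hv _ 5 (by tauto)
  have c22 : coeff μ (h 2 2 * fermatGen K n 2 * fermatGen K n 2) = 0 := hv _ 2 (by tauto)
  have c23 : coeff μ (h 2 3 * fermatGen K n 2 * fermatGen K n 3) = 0 := by
    rw [mul_right_comm]; exact hv _ 2 (by tauto)
  have c24 : coeff μ (h 2 4 * fermatGen K n 2 * fermatGen K n 4) = 0 := by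
    rw [mul_right_comm]; exact hv _ 2 (by tauto)
  have c25 : coeff μ (h 2 5 * fermatGen K n 2 * fermatGen K n 5) = 0 := hv _ 5 (by tauto)
  have c35 : coeff μ (h 3 5 * fermatGen K n 3 * fermatGen K n 5) = 0 := hv _ 5 (by tauto)
  have c45 : coeff μ (h 4 5 * fermatGen K n 4 * fermatGen K n 5) = 0 := hv _ 5 (by tauto)
  have c55 : coeff μ (h 5 5 * fermatGen K n 5 * fermatGen K n 5) = 0 := hv _ 5 (by tauto)
  -- pair (0,0)
  have c00 : coeff μ (h 0 0 * fermatGen K n 0 * fermatGen K n 0) = 0 := by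
    have e : h 0 0 * fermatGen K n 0 * fermatGen K n 0
        = (h 0 0 * (X 0 ^ n - X 1 ^ n)^2 * (X 2 ^ n - 2 * X 3 ^ n) * X 0 ^ 2 * X 1 ^ 2) * X 2 ^ n
          + (h 0 0 * (X 0 ^ n - X 1 ^ n)^2 * X 0 ^ 2 * X 1 ^ 2) * X 3 ^ (2*n) := by
      show h 0 0 * ((X 0 ^ n - X 1 ^ n) * (X 2 ^ n - X 3 ^ n) * X 0 * X 1)
          * ((X 0 ^ n - X 1 ^ n) * (X 2 ^ n - X 3 ^ n) * X 0 * X 1) = _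
      ring
    rw [e, coeff_add, fermat_kill _ _ _ _ (by omega), fermat_kill _ _ _ _ (by omega), add_zero]
  -- pair (0,3)
  have c03 : coeff μ (h 0 3 * fermatGen K n 0 * fermatGen K n 3) = 0 := by
    have e : h 0 3 * fermatGen K n 0 * fermatGen K n 3
        = (h 0 3 * (X 0 ^ n - X 1 ^ n) * (X 0 ^ n - X 2 ^ n) * (X 1 ^ n - X 3 ^ n)
            * X 0 * X 1 ^ 2 * X 3) * X 2 ^ n
          + (-(h 0 3 * (X 0 ^ n - X 1 ^ n) * (X 0 ^ n - X 2 ^ n) * (X 1 ^ n - X 3 ^ n)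
            * X 0 * X 1 ^ 2)) * X 3 ^ (n+1) := by
      show h 0 3 * ((X 0 ^ n - X 1 ^ n) * (X 2 ^ n - X 3 ^ n) * X 0 * X 1)
          * ((X 0 ^ n - X 2 ^ n) * (X 1 ^ n - X 3 ^ n) * X 1 * X 3) = _
      ring
    rw [e, coeff_add, fermat_kill _ _ _ _ (by omega), fermat_kill _ _ _ _ (by omega), add_zero]
  -- pair (0,4)
  have c04 : coeff μ (h 0 4 * fermatGen K n 0 * fermatGen K n 4) = 0 := by
    have e : h 0 4 * fermatGen K n 0 * fermatGen K n 4
        = (h 0 4 * (X 0 ^ n - X 1 ^ n) * (X 0 ^ n - X 3 ^ n) * (X 1 ^ n - X 2 ^ n)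
            * X 0 ^ 2 * X 1 * X 3) * X 2 ^ n
          + (-(h 0 4 * (X 0 ^ n - X 1 ^ n) * (X 0 ^ n - X 3 ^ n) * (X 1 ^ n - X 2 ^ n)
            * X 0 ^ 2 * X 1)) * X 3 ^ (n+1) := by
      show h 0 4 * ((X 0 ^ n - X 1 ^ n) * (X 2 ^ n - X 3 ^ n) * X 0 * X 1)
          * ((X 0 ^ n - X 3 ^ n) * (X 1 ^ n - X 2 ^ n) * X 0 * X 3) = _
      ring
    rw [e, coeff_add, fermat_kill _ _ _ _ (by omega), fermat_kill _ _ _ _ (by omega), add_zero]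
  -- pair (3,4)
  have c34 : coeff μ (h 3 4 * fermatGen K n 3 * fermatGen K n 4) = 0 := by
    have e : h 3 4 * fermatGen K n 3 * fermatGen K n 4
        = (h 3 4 * X 1 ^ (2*n+1) * X 3 ^ 2) * X 0 ^ (2*n+1)
          + (-(h 3 4 * X 0 ^ n * X 1 ^ n * (X 0 ^ n + X 1 ^ n - X 3 ^ n) * X 0 * X 1))
              * X 3 ^ (n+2)
          + (-(h 3 4 * (X 0 ^ n + X 1 ^ n - X 2 ^ n) * (X 0 ^ n - X 3 ^ n) * (X 1 ^ n - X 3 ^ n)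
              * X 0 * X 1 * X 3 ^ 2)) * X 2 ^ n := by
      show h 3 4 * ((X 0 ^ n - X 2 ^ n) * (X 1 ^ n - X 3 ^ n) * X 1 * X 3)
          * ((X 0 ^ n - X 3 ^ n) * (X 1 ^ n - X 2 ^ n) * X 0 * X 3) = _
      ring
    rw [e, coeff_add, coeff_add, fermat_kill _ _ _ _ (by omega),
      fermat_kill _ _ _ _ (by omega), fermat_kill _ _ _ _ (by omega)]
    ring
  -- pair (4,4)
  have c44 : coeff μ (h 4 4 * fermatGen K n 4 * fermatGen K n 4) = 0 := by
    have e : h 4 4 * fermatGen K n 4 * fermatGen K n 4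
        = (h 4 4 * X 1 ^ (2*n) * X 3 ^ 2) * X 0 ^ (2*n+2)
          + (-(h 4 4 * X 1 ^ (2*n) * (2 * X 0 ^ n - X 3 ^ n) * X 0 ^ 2)) * X 3 ^ (n+2)
          + (-(h 4 4 * (2 * X 1 ^ n - X 2 ^ n) * (X 0 ^ n - X 3 ^ n)^2 * X 0 ^ 2 * X 3 ^ 2))
              * X 2 ^ n := by
      show h 4 4 * ((X 0 ^ n - X 3 ^ n) * (X 1 ^ n - X 2 ^ n) * X 0 * X 3)
          * ((X 0 ^ n - X 3 ^ n) * (X 1 ^ n - X 2 ^ n) * X 0 * X 3) = _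
      ring
    rw [e, coeff_add, coeff_add, fermat_kill _ _ _ _ (by omega),
      fermat_kill _ _ _ _ (by omega), fermat_kill _ _ _ _ (by omega)]
    ring
  -- pair (3,3): the only contributing pair
  set ν : Fin 4 →₀ ℕ := Finsupp.single 1 (n - 2) + Finsupp.single 3 (n - 2) with hνdef
  set s : Fin 4 →₀ ℕ := Finsupp.single 0 (2*n) + Finsupp.single 1 (2*n+2) + Finsupp.single 3 2
    with hsdef
  have hsplit : μ = ν + s := by
    ext i
    fin_cases i <;>
      simp [hμdef, hνdef, hsdef, Finsupp.add_apply, Finsupp.single_apply] <;> omega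
  have hsmono : (monomial s 1 : MvPolynomial (Fin 4) K)
      = X 0 ^ (2*n) * X 1 ^ (2*n+2) * X 3 ^ 2 := by
    rw [X_pow_eq_monomial, X_pow_eq_monomial, X_pow_eq_monomial, monomial_mul, monomial_mul,
      hsdef]
    norm_num
  have c33 : coeff μ (h 3 3 * fermatGen K n 3 * fermatGen K n 3) = coeff ν (h 3 3) := by
    have e : h 3 3 * fermatGen K n 3 * fermatGen K n 3
        = h 3 3 * (monomial s 1)
          + (-(h 3 3 * (2 * X 0 ^ n - X 2 ^ n) * (X 1 ^ n - X 3 ^ n)^2 * X 1 ^ 2 * X 3 ^ 2))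
              * X 2 ^ n
          + (-(h 3 3 * X 0 ^ (2*n) * (2 * X 1 ^ n - X 3 ^ n) * X 1 ^ 2)) * X 3 ^ (n+2) := by
      rw [hsmono]
      show h 3 3 * ((X 0 ^ n - X 2 ^ n) * (X 1 ^ n - X 3 ^ n) * X 1 * X 3)
          * ((X 0 ^ n - X 2 ^ n) * (X 1 ^ n - X 3 ^ n) * X 1 * X 3) = _
      ring
    rw [e, coeff_add, coeff_add, fermat_kill _ _ _ _ (by omega),
      fermat_kill _ _ _ _ (by omega), hsplit, coeff_mul_monomial, mul_one]
    ring
  -- the left-hand side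
  have hmono : (monomial μ 1 : MvPolynomial (Fin 4) K)
      = X 0 ^ (2*n) * X 1 ^ (3*n) * X 3 ^ n := by
    rw [X_pow_eq_monomial, X_pow_eq_monomial, X_pow_eq_monomial, monomial_mul, monomial_mul,
      hμdef]
    norm_num
  have cL : coeff μ ((X 0 ^ n - X 1 ^ n) * (X 0 ^ n - X 2 ^ n) * (X 0 ^ n - X 3 ^ n) *
          (X 1 ^ n - X 2 ^ n) * (X 1 ^ n - X 3 ^ n) * (X 2 ^ n - X 3 ^ n) : MvPolynomial (Fin 4) K)
      = 1 := by
    have e : ((X 0 ^ n - X 1 ^ n) * (X 0 ^ n - X 2 ^ n) * (X 0 ^ n - X 3 ^ n) *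
          (X 1 ^ n - X 2 ^ n) * (X 1 ^ n - X 3 ^ n) * (X 2 ^ n - X 3 ^ n) : MvPolynomial (Fin 4) K)
        = monomial μ 1
          + ((X 0 ^ n - X 1 ^ n) * (X 0 ^ n - X 3 ^ n) * (X 1 ^ n - X 3 ^ n) *
              (X 0 ^ n * X 1 ^ n - (X 0 ^ n + X 1 ^ n - X 2 ^ n) * (X 2 ^ n - X 3 ^ n)))
              * X 2 ^ n
          + ((X 0 ^ n - X 1 ^ n) * (X 1 ^ n - X 3 ^ n) * X 0 ^ n * X 1 ^ n
              + (X 0 ^ n - X 1 ^ n) * X 0 ^ (2*n) * X 1 ^ n) * X 3 ^ (2*n)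
          + (-(X 1 ^ (2*n) * X 3 ^ n)) * X 0 ^ (3*n) := by
      rw [hmono]
      ring
    rw [e, coeff_add, coeff_add, coeff_add, fermat_kill _ _ _ _ (by omega),
      fermat_kill _ _ _ _ (by omega), fermat_kill _ _ _ _ (by omega), coeff_monomial,
      if_pos rfl]
    ring
  -- put everything together
  have key := congrArg (coeff μ) heq
  rw [cL, coeff_sum] at key
  simp only [coeff_sum, Finset.sum_filter, Fin.sum_univ_six] at key
  simp (config := { decide := true }) only [if_true, if_false] at key
  simp only [coeff_add, coeff_zero] at key
  rw [c00, c01, c02, c03, c04, c05, c11, c12, c13, c14, c15, c22, c23, c24, c25, c33, c34,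
    c35, c44, c45, c55] at key
  simpa using key.symm
end
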